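/- Let O₀ = k[[s, ε]]/(ε²) and let O_n = k[[s̃, ε̃]]/(ε̃²) be an O₀-algebra via s ↦ s̃ and ε ↦ ε̃·s̃^n. Then O_n, viewed as an O₀-module, is isomorphic to the ideal (s^n, ε) ⊂ O₀; an isomorphism sends 1 ∈ O_n to s^n and ε̃ to ε. -/
import Mathlib


open TrivSqZeroExt

/-- `O₀ = k[[s, ε]]/(ε²)`, modelled as the dual numbers over `k[[s]]`. -/
abbrev RibbonLocalRing (k : Type) [Field k] : Type := DualNumber (PowerSeries k)

/-- the element `s` of `O₀` -/
noncomputable def sElt (k : Type) [Field k] : RibbonLocalRing k := inl PowerSeries.X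

/-- the element `ε` of `O₀` -/
noncomputable def epsElt (k : Type) [Field k] : RibbonLocalRing k := DualNumber.eps

/-- The `O₀`-algebra map `O₀ → O_n` onto the `n`-th blow-up algebra
`O_n = k[[s̃, ε̃]]/(ε̃²)`, given by `s ↦ s̃` and `ε ↦ ε̃ s̃ⁿ`; here `O_n` is identified with
another copy of `k[[s̃, ε̃]]/(ε̃²)` and the map sends `s ↦ s` and `ε ↦ s^n ε`. -/
noncomputable def blowupMap (k : Type) [Field k] (n : ℕ) :
    RibbonLocalRing k →ₐ[PowerSeries k] RibbonLocalRing k :=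
  DualNumber.lift ⟨(Algebra.ofId (PowerSeries k) (RibbonLocalRing k),
      inr (PowerSeries.X ^ n)),
    by simp [inr_mul_inr], fun a => mul_comm _ _⟩

/-- `O_n`, the `n`-th blow-up algebra, viewed as an `O₀`-module via `blowupMap`. -/
def BlowupModule (k : Type) [Field k] (_n : ℕ) : Type := RibbonLocalRing k

instance (k : Type) [Field k] (n : ℕ) : AddCommGroup (BlowupModule k n) :=
  inferInstanceAs (AddCommGroup (RibbonLocalRing k))

noncomputable instance (k : Type) [Field k] (n : ℕ) :
    Module (RibbonLocalRing k) (BlowupModule k n) :=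
  Module.compHom (RibbonLocalRing k) (blowupMap k n).toRingHom

/-- the identification of `O_n` with the underlying set of `O₀` -/
def toBlowupModule (k : Type) [Field k] (n : ℕ) : RibbonLocalRing k → BlowupModule k n := id

/-- the ideal `I_n = (sⁿ, ε)` of `O₀` -/
noncomputable def In (k : Type) [Field k] (n : ℕ) : Ideal (RibbonLocalRing k) :=
  Ideal.span {sElt k ^ n, epsElt k}

/-- the inverse identification of `O_n` with the underlying set of `O₀` -/
def ofBM (k : Type) [Field k] (n : ℕ) : BlowupModule k n → RibbonLocalRing k := id

lemma ofBM_add (k : Type) [Field k] (n : ℕ) (p q : BlowupModule k n) :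
    ofBM k n (p + q) = ofBM k n p + ofBM k n q := rfl

lemma smul_def' (k : Type) [Field k] (n : ℕ) (r : RibbonLocalRing k) (p : BlowupModule k n) :
    ofBM k n (r • p) = (blowupMap k n r) * ofBM k n p := rfl

lemma blowupMap_fst (k : Type) [Field k] (n : ℕ) (r : RibbonLocalRing k) :
    (blowupMap k n r).fst = r.fst := by
  simp [blowupMap, DualNumber.lift_apply_apply, Algebra.ofId_apply, algebraMap_eq_inl]

lemma blowupMap_snd (k : Type) [Field k] (n : ℕ) (r : RibbonLocalRing k) :
    (blowupMap k n r).snd = r.snd * PowerSeries.X ^ n := by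
  simp [blowupMap, DualNumber.lift_apply_apply, Algebra.ofId_apply, algebraMap_eq_inl,
    mul_comm]

lemma sElt_pow_eq (k : Type) [Field k] (n : ℕ) : sElt k ^ n = inl (PowerSeries.X ^ n) := by
  simp [sElt, ← inl_pow]

lemma mem_In (k : Type) [Field k] (n : ℕ) (x y : PowerSeries k) :
    (inl (PowerSeries.X ^ n * x) + inr y : RibbonLocalRing k) ∈ In k n := by
  rw [In, Ideal.mem_span_pair]
  refine ⟨inl x, inl y, ?_⟩
  rw [sElt_pow_eq]
  refine TrivSqZeroExt.ext ?_ ?_ <;>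
    simp only [fst_add, fst_mul, fst_inl, fst_inr, snd_add, snd_mul, snd_inl, snd_inr,
      epsElt, DualNumber.fst_eps, DualNumber.snd_eps, smul_eq_mul,
      MulOpposite.smul_eq_mul_unop, MulOpposite.unop_op, mul_zero, zero_mul, mul_one,
      one_mul, add_zero, zero_add, smul_zero] <;> ring

/-- the linear map underlying the isomorphism -/
noncomputable def blowupToIdeal (k : Type) [Field k] (n : ℕ) :
    BlowupModule k n →ₗ[RibbonLocalRing k] In k n where
  toFun p := ⟨inl (PowerSeries.X ^ n * (ofBM k n p).fst) + inr (ofBM k n p).snd,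
    mem_In k n _ _⟩
  map_add' p q := by
    apply Subtype.ext
    simp only [ofBM_add]
    push_cast
    refine TrivSqZeroExt.ext ?_ ?_ <;>
      simp only [fst_add, fst_inl, fst_inr, snd_add, snd_inl, snd_inr, mul_add,
        add_zero, zero_add] <;> ring
  map_smul' r p := by
    apply Subtype.ext
    show (inl (PowerSeries.X ^ n * (ofBM k n (r • p)).fst) + inr (ofBM k n (r • p)).snd
        : RibbonLocalRing k)
      = r * (inl (PowerSeries.X ^ n * (ofBM k n p).fst) + inr (ofBM k n p).snd)
    rw [smul_def']
    refine TrivSqZeroExt.ext ?_ ?_ <;>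
      simp only [fst_add, fst_mul, fst_inl, fst_inr, snd_add, snd_mul, snd_inl, snd_inr,
        blowupMap_fst, blowupMap_snd, smul_eq_mul, MulOpposite.smul_eq_mul_unop,
        MulOpposite.unop_op, mul_zero, zero_mul, mul_one, one_mul, add_zero, zero_add,
        smul_zero] <;> ring

lemma blowupToIdeal_bijective (k : Type) [Field k] (n : ℕ) :
    Function.Bijective (blowupToIdeal k n) := by
  constructor
  · intro p q h
    have h' := congrArg (Subtype.val) h
    simp only [blowupToIdeal, LinearMap.coe_mk, AddHom.coe_mk] at h'
    have h1 : PowerSeries.X ^ n * (ofBM k n p).fst = PowerSeries.X ^ n * (ofBM k n q).fst := by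
      simpa only [fst_add, fst_inl, fst_inr, add_zero] using congrArg fst h'
    have h2 : (ofBM k n p).snd = (ofBM k n q).snd := by
      simpa only [snd_add, snd_inl, snd_inr, zero_add] using congrArg snd h'
    have hX : (PowerSeries.X : PowerSeries k) ^ n ≠ 0 :=
      pow_ne_zero _ PowerSeries.X_ne_zero
    have h1' : (ofBM k n p).fst = (ofBM k n q).fst :=
      mul_left_cancel₀ hX h1
    show ofBM k n p = ofBM k n q
    exact TrivSqZeroExt.ext h1' h2
  · rintro ⟨q, hq⟩
    rw [In, Ideal.mem_span_pair] at hq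
    obtain ⟨u, v, huv⟩ := hq
    refine ⟨toBlowupModule k n (inl u.fst + inr (u.snd * PowerSeries.X ^ n + v.fst)), ?_⟩
    apply Subtype.ext
    show (inl (PowerSeries.X ^ n * (inl u.fst + inr (u.snd * PowerSeries.X ^ n + v.fst)
        : RibbonLocalRing k).fst)
      + inr (inl u.fst + inr (u.snd * PowerSeries.X ^ n + v.fst)
        : RibbonLocalRing k).snd : RibbonLocalRing k) = q
    rw [← huv, sElt_pow_eq]
    refine TrivSqZeroExt.ext ?_ ?_ <;>
      simp only [fst_add, fst_mul, fst_inl, fst_inr, snd_add, snd_mul, snd_inl, snd_inr,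
        epsElt, DualNumber.fst_eps, DualNumber.snd_eps, smul_eq_mul,
        MulOpposite.smul_eq_mul_unop, MulOpposite.unop_op, mul_zero, zero_mul, mul_one,
        one_mul, add_zero, zero_add, smul_zero] <;> ring

/-- `O_n`, viewed as an `O₀`-module via `s ↦ s̃`, `ε ↦ ε̃ s̃ⁿ`, is isomorphic to the ideal
`(sⁿ, ε) ⊂ O₀`; an isomorphism sends `1 ∈ O_n` to `sⁿ` and `ε̃` to `ε`. -/
theorem blowupModule_iso_ideal (k : Type) [Field k] (n : ℕ) :
    ∃ e : BlowupModule k n ≃ₗ[RibbonLocalRing k] In k n,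
      ((e (toBlowupModule k n 1) : RibbonLocalRing k) = sElt k ^ n) ∧
      ((e (toBlowupModule k n (epsElt k)) : RibbonLocalRing k) = epsElt k) := by
  refine ⟨LinearEquiv.ofBijective (blowupToIdeal k n) (blowupToIdeal_bijective k n), ?_, ?_⟩
  · show (inl (PowerSeries.X ^ n * ((1 : RibbonLocalRing k)).fst)
      + inr ((1 : RibbonLocalRing k)).snd : RibbonLocalRing k) = sElt k ^ n
    rw [sElt_pow_eq]
    refine TrivSqZeroExt.ext ?_ ?_ <;>
      simp only [fst_add, fst_inl, fst_inr, snd_add, snd_inl, snd_inr, fst_one, snd_one,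
        mul_one, add_zero, zero_add]
  · show (inl (PowerSeries.X ^ n * (epsElt k).fst)
      + inr ((epsElt k)).snd : RibbonLocalRing k) = epsElt k
    refine TrivSqZeroExt.ext ?_ ?_ <;>
      simp only [fst_add, fst_inl, fst_inr, snd_add, snd_inl, snd_inr, epsElt,
        DualNumber.fst_eps, DualNumber.snd_eps, mul_zero, add_zero, zero_add]
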